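/- Let A ∈ ℝ^{n×n}, B ∈ ℝ^{n×s}, and let 𝒱 ∈ ℝ^{n×q} satisfy 𝒱ᵀ𝒱 = I_q and have column space equal to the block Krylov subspace 𝕂_m(A,B), the span of all columns of B, AB, …, A^{m−1}B. Set 𝒯 = 𝒱ᵀ A 𝒱, B_m = 𝒱ᵀ B and ρ = ‖A‖. For t ≥ t₀ define X(t) = ∫_{t₀}^t e^{(t−τ)A} B Bᵀ e^{(t−τ)Aᵀ} dτ and X_m(t) = ∫_{t₀}^t 𝒱 e^{(t−τ)𝒯} B_m B_mᵀ e^{(t−τ)𝒯ᵀ} 𝒱ᵀ dτ. Then ‖X(t) − X_m(t)‖ ≤ 2 ‖B‖ (ρ^m / m!) e^{t(μ₂(A)+ρ)} ( ‖B‖ + ‖B_m‖ ) ∫_{t₀}^t e^{−τ(μ₂(A)+ρ)} (t−τ)^m dτ. -/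

import Mathlib

/-!
Write `F(s) = e^{sA} B` and `G(s) = 𝒱 e^{s𝒯} B_m`, so that the two integrands are `F Fᵀ` and
`G Gᵀ` at `s = t − τ`, and `F Fᵀ − G Gᵀ = F (F − G)ᵀ + (F − G) Gᵀ`.

Both exponentials are controlled by the logarithmic norm: if `⟪x, Mx⟫ ≤ c‖x‖²` then
`e^{−2cs}‖e^{sM}x‖²` is non-increasing, so `‖e^{sM}‖ ≤ e^{sc}`. For `M = A` this holds with
`c = μ₂(A)` (Rayleigh), and for `M = 𝒯` with the same `c`, since `⟪y, 𝒯y⟫ = ⟪𝒱y, A𝒱y⟫` and `𝒱`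
is an isometry. Hence `‖F‖, ‖G‖ ≤ e^{sμ₂(A)}‖B‖`.

Since `𝒱𝒱ᵀ` fixes the Krylov space, `𝒱 𝒯ᵏ B_m = Aᵏ B` for `k < m`, so the exponential series of
`F − G` starts at the term of order `m`; bounding each term by `(sρ)ʲ/j! (‖B‖ + ‖B_m‖)` and
using `(j + m)! ≥ j! m!` gives `‖F − G‖ ≤ (‖B‖ + ‖B_m‖) (sρ)^m/m! e^{sρ}`.
-/

open Matrix Set intervalIntegral
open scoped Matrix.Norms.L2Operator

/-- The logarithmic 2-norm `μ₂(M)`. -/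
noncomputable def mu2 {k : ℕ} (M : Matrix (Fin k) (Fin k) ℝ) : ℝ :=
  (1 / 2) * ⨆ i, (show (M + Mᵀ).IsHermitian by
    simpa [Matrix.conjTranspose_eq_transpose_of_trivial] using
      Matrix.isHermitian_add_transpose_self M).eigenvalues i

open scoped InnerProductSpace Nat

open scoped MatrixOrder in
theorem Matrix.IsHermitian.dotProduct_mulVec_le_iSup_eigenvalues {ι : Type*} [Fintype ι]
    [DecidableEq ι] {S : Matrix ι ι ℝ} (hS : S.IsHermitian) (x : ι → ℝ) :
    x ⬝ᵥ S *ᵥ x ≤ (⨆ i, hS.eigenvalues i) * (x ⬝ᵥ x) := by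
  have hle : S ≤ algebraMap ℝ _ (⨆ i, hS.eigenvalues i) := by
    refine le_algebraMap_of_spectrum_le (fun r hr => ?_) hS
    obtain ⟨i, rfl⟩ := hS.spectrum_real_eq_range_eigenvalues ▸ hr
    exact le_ciSup (Set.finite_range _).bddAbove i
  have := (Matrix.le_iff.1 hle).dotProduct_mulVec_nonneg x
  simp only [star_trivial, Algebra.algebraMap_eq_smul_one, sub_mulVec, smul_mulVec, one_mulVec,
    dotProduct_sub, dotProduct_smul, smul_eq_mul] at this
  linarith

theorem dotProduct_mulVec_le_mu2 {k : ℕ} (M : Matrix (Fin k) (Fin k) ℝ) (x : Fin k → ℝ) :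
    x ⬝ᵥ M *ᵥ x ≤ mu2 M * (x ⬝ᵥ x) := by
  have hH : (M + Mᵀ).IsHermitian := by
    simpa [conjTranspose_eq_transpose_of_trivial] using isHermitian_add_transpose_self M
  have hsymm : x ⬝ᵥ (M + Mᵀ) *ᵥ x = 2 * (x ⬝ᵥ M *ᵥ x) := by
    rw [add_mulVec, dotProduct_add, mulVec_transpose, dotProduct_comm x (x ᵥ* M),
      ← dotProduct_mulVec]
    ring
  have := hH.dotProduct_mulVec_le_iSup_eigenvalues x
  rw [show mu2 M = 1 / 2 * ⨆ i, hH.eigenvalues i from rfl]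
  linarith

section Dissipative

variable {E : Type*} [NormedAddCommGroup E] [InnerProductSpace ℝ E] [CompleteSpace E]

theorem ContinuousLinearMap.norm_exp_smul_apply_le (L : E →L[ℝ] E) {c : ℝ}
    (hL : ∀ x, ⟪x, L x⟫_ℝ ≤ c * ‖x‖ ^ 2) {s : ℝ} (hs : 0 ≤ s) (x : E) :
    ‖NormedSpace.exp (s • L) x‖ ≤ Real.exp (s * c) * ‖x‖ := by
  set u : ℝ → E := fun r => NormedSpace.exp (r • L) x
  have hu : ∀ r, HasDerivAt u (L (u r)) r := fun r =>
    (ContinuousLinearMap.apply ℝ E x).hasFDerivAt.comp_hasDerivAt r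
      (hasDerivAt_exp_smul_const' L r)
  have hanti : Antitone fun r => Real.exp (-(2 * c) * r) * ‖u r‖ ^ 2 := by
    refine antitone_of_hasDerivAt_nonpos
      (fun r => (((hasDerivAt_id r).const_mul (-(2 * c))).exp).mul (hu r).norm_sq) fun r => ?_
    have := mul_le_mul_of_nonneg_left (hL (u r)) (Real.exp_pos (-(2 * c) * r)).le
    simp only [id, mul_one, Pi.zero_apply]
    linarith
  have hdecay : Real.exp (-(2 * c) * s) * ‖u s‖ ^ 2 ≤ ‖x‖ ^ 2 := by
    simpa [u] using hanti hs
  rw [← pow_le_pow_iff_left₀ (norm_nonneg _) (by positivity) two_ne_zero]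
  calc ‖u s‖ ^ 2 = Real.exp (2 * c * s) * (Real.exp (-(2 * c) * s) * ‖u s‖ ^ 2) := by
        rw [← mul_assoc, ← Real.exp_add]; ring_nf; simp
    _ ≤ Real.exp (2 * c * s) * ‖x‖ ^ 2 := by gcongr
    _ = (Real.exp (s * c) * ‖x‖) ^ 2 := by rw [mul_pow, ← Real.exp_nat_mul]; ring_nf

theorem ContinuousLinearMap.norm_exp_smul_le (L : E →L[ℝ] E) {c : ℝ}
    (hL : ∀ x, ⟪x, L x⟫_ℝ ≤ c * ‖x‖ ^ 2) {s : ℝ} (hs : 0 ≤ s) :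
    ‖NormedSpace.exp (s • L)‖ ≤ Real.exp (s * c) :=
  opNorm_le_bound _ (Real.exp_pos _).le (L.norm_exp_smul_apply_le hL hs)

end Dissipative

section HasSum

variable {X R ι κ σ : Type*} [Fintype κ] [NonUnitalNonAssocSemiring R] [TopologicalSpace R]
  [IsTopologicalSemiring R]

theorem HasSum.matrix_mul_left {f : X → Matrix κ σ R} {a : Matrix κ σ R} (C : Matrix ι κ R)
    (h : HasSum f a) : HasSum (fun x => C * f x) (C * a) :=
  h.map (addMonoidHomMulLeft C) (continuous_const.matrix_mul continuous_id)

theorem HasSum.matrix_mul_right {f : X → Matrix ι κ R} {a : Matrix ι κ R} (C : Matrix κ σ R)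
    (h : HasSum f a) : HasSum (fun x => f x * C) (a * C) :=
  h.map (addMonoidHomMulRight C) (continuous_id.matrix_mul continuous_const)

end HasSum

theorem norm_le_of_hasSum_exp_tail {E : Type*} [NormedAddCommGroup E] [NormedSpace ℝ E]
    {f : ℕ → E} {S : E} {s ρ D : ℝ} {m : ℕ} (hs : 0 ≤ s) (hρ : 0 ≤ ρ)
    (hS : HasSum (fun j => (s ^ j / j !) • f j) S) (hzero : ∀ j < m, f j = 0)
    (hf : ∀ j, ‖f j‖ ≤ ρ ^ j * D) :
    ‖S‖ ≤ D * ((s * ρ) ^ m / m !) * Real.exp (s * ρ) := by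
  have hhead : ∑ j ∈ Finset.range m, (s ^ j / j !) • f j = 0 :=
    Finset.sum_eq_zero fun j hj => by rw [hzero j (Finset.mem_range.1 hj), smul_zero]
  have htail : HasSum (fun j => (s ^ (j + m) / (j + m) !) • f (j + m)) S := by
    simpa [hhead] using (hasSum_nat_add_iff' m).2 hS
  have hexp : HasSum (fun j => D * ((s * ρ) ^ m / m !) * ((s * ρ) ^ j / j !))
      (D * ((s * ρ) ^ m / m !) * Real.exp (s * ρ)) := by
    rw [Real.exp_eq_exp_ℝ]
    exact (NormedSpace.expSeries_div_hasSum_exp (s * ρ)).mul_left _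
  refine htail.norm_le_of_bounded hexp fun j => ?_
  have hfact : (m ! * j ! : ℝ) ≤ (j + m) ! := by
    rw [add_comm j m]
    exact_mod_cast Nat.le_of_dvd (Nat.factorial_pos _)
      (Nat.factorial_mul_factorial_dvd_factorial_add m j)
  have hD : 0 ≤ D := by simpa using (norm_nonneg _).trans (hf 0)
  rw [norm_smul, Real.norm_of_nonneg (by positivity)]
  calc s ^ (j + m) / (j + m) ! * ‖f (j + m)‖ ≤ s ^ (j + m) / (j + m) ! * (ρ ^ (j + m) * D) := by
        gcongr; exact hf _
    _ ≤ s ^ (j + m) / (m ! * j !) * (ρ ^ (j + m) * D) := by gcongr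
    _ = D * ((s * ρ) ^ m / m !) * ((s * ρ) ^ j / j !) := by
        field_simp; ring

theorem continuous_exp_smul {𝔸 : Type*} [NormedRing 𝔸] [NormedAlgebra ℝ 𝔸] [CompleteSpace 𝔸]
    (x : 𝔸) : Continuous fun r : ℝ => NormedSpace.exp (r • x) :=
  continuous_iff_continuousAt.2 fun r => (hasDerivAt_exp_smul_const' x r).continuousAt

section L2OpNorm

variable {ι κ σ : Type*} [Fintype ι] [Fintype κ]

theorem Matrix.toEuclideanCLM_exp [DecidableEq ι] (M : Matrix ι ι ℝ) :
    toEuclideanCLM (𝕜 := ℝ) (NormedSpace.exp M) =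
      NormedSpace.exp (toEuclideanCLM (𝕜 := ℝ) M) := by
  refine NormedSpace.map_exp_of_mem_ball (𝕂 := ℝ) _ ?_ _ ?_
  · exact AddMonoidHomClass.continuous_of_bound _ 1 fun N => by
      rw [one_mul, l2_opNorm_toEuclideanCLM]
  · rw [NormedSpace.expSeries_radius_eq_top]
    exact edist_lt_top _ _

theorem Matrix.l2_opNorm_exp_smul_le [DecidableEq ι] (M : Matrix ι ι ℝ) {c : ℝ}
    (hM : ∀ x, x ⬝ᵥ M *ᵥ x ≤ c * (x ⬝ᵥ x)) {s : ℝ} (hs : 0 ≤ s) :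
    ‖NormedSpace.exp (s • M)‖ ≤ Real.exp (s * c) := by
  rw [← l2_opNorm_toEuclideanCLM, toEuclideanCLM_exp, map_smul]
  refine ContinuousLinearMap.norm_exp_smul_le _ (fun x => ?_) hs
  rw [← real_inner_self_eq_norm_sq, EuclideanSpace.inner_eq_star_dotProduct,
    EuclideanSpace.inner_eq_star_dotProduct, ofLp_toEuclideanCLM]
  simpa [dotProduct_comm] using hM x.ofLp

theorem Matrix.l2_opNorm_one_le [DecidableEq ι] : ‖(1 : Matrix ι ι ℝ)‖ ≤ 1 := by
  rw [← diagonal_one, l2_opNorm_diagonal]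
  exact pi_norm_le_iff_of_nonneg zero_le_one |>.2 fun _ => by simp

theorem Matrix.l2_opNorm_pow_le [DecidableEq ι] (M : Matrix ι ι ℝ) (j : ℕ) : ‖M ^ j‖ ≤ ‖M‖ ^ j := by
  induction j with
  | zero => simpa using l2_opNorm_one_le
  | succ j ih =>
    rw [pow_succ, pow_succ]
    exact (l2_opNorm_mul _ _).trans (by gcongr)

theorem Matrix.l2_opNorm_transpose [DecidableEq ι] [DecidableEq κ] (M : Matrix ι κ ℝ) :
    ‖Mᵀ‖ = ‖M‖ := by
  rw [← conjTranspose_eq_transpose_of_trivial, l2_opNorm_conjTranspose]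

theorem Matrix.exp_smul_transpose [DecidableEq ι] (s : ℝ) (M : Matrix ι ι ℝ) :
    NormedSpace.exp (s • Mᵀ) = (NormedSpace.exp (s • M))ᵀ := by
  rw [← transpose_smul, exp_transpose]

theorem Matrix.hasSum_exp_smul_mul [DecidableEq ι] (s : ℝ) (A : Matrix ι ι ℝ) (B : Matrix ι σ ℝ) :
    HasSum (fun j => (s ^ j / j !) • (A ^ j * B)) (NormedSpace.exp (s • A) * B) := by
  convert (NormedSpace.exp_series_hasSum_exp' (𝕂 := ℝ) (s • A)).matrix_mul_right B using 2 with j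
  simp [smul_pow, smul_smul, div_eq_inv_mul]

theorem Matrix.l2_opNorm_mul_transpose_sub_mul_transpose_le [DecidableEq ι] [DecidableEq κ]
    (F G : Matrix ι κ ℝ) :
    ‖F * Fᵀ - G * Gᵀ‖ ≤ (‖F‖ + ‖G‖) * ‖F - G‖ := by
  have hsplit : F * Fᵀ - G * Gᵀ = F * (F - G)ᵀ + (F - G) * Gᵀ := by
    rw [transpose_sub, Matrix.mul_sub, Matrix.sub_mul]
    abel
  calc ‖F * Fᵀ - G * Gᵀ‖ ≤ ‖F‖ * ‖(F - G)ᵀ‖ + ‖F - G‖ * ‖Gᵀ‖ := by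
        rw [hsplit]
        exact (norm_add_le _ _).trans (add_le_add (l2_opNorm_mul _ _) (l2_opNorm_mul _ _))
    _ = (‖F‖ + ‖G‖) * ‖F - G‖ := by
        rw [l2_opNorm_transpose, l2_opNorm_transpose]
        ring

theorem Matrix.l2_opNorm_le_one_of_transpose_mul_self_eq_one [DecidableEq κ] {V : Matrix ι κ ℝ}
    (hV : Vᵀ * V = 1) : ‖V‖ ≤ 1 := by
  have h := l2_opNorm_conjTranspose_mul_self V
  rw [conjTranspose_eq_transpose_of_trivial, hV] at h
  nlinarith [norm_nonneg V, l2_opNorm_one_le (ι := κ)]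

theorem Matrix.l2_opNorm_mul_le_of_transpose_mul_self_eq_one [DecidableEq ι] [DecidableEq κ]
    [Fintype σ] [DecidableEq σ] {V : Matrix ι κ ℝ} (hV : Vᵀ * V = 1) (M : Matrix κ σ ℝ) :
    ‖V * M‖ ≤ ‖M‖ :=
  (l2_opNorm_mul _ _).trans <|
    mul_le_of_le_one_left (norm_nonneg _) (l2_opNorm_le_one_of_transpose_mul_self_eq_one hV)

theorem Matrix.l2_opNorm_transpose_mul_le_of_transpose_mul_self_eq_one [DecidableEq ι]
    [DecidableEq κ] [Fintype σ] [DecidableEq σ] {V : Matrix ι κ ℝ} (hV : Vᵀ * V = 1)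
    (M : Matrix ι σ ℝ) : ‖Vᵀ * M‖ ≤ ‖M‖ := by
  refine (l2_opNorm_mul _ _).trans ?_
  rw [l2_opNorm_transpose]
  exact mul_le_of_le_one_left (norm_nonneg _) (l2_opNorm_le_one_of_transpose_mul_self_eq_one hV)

theorem Matrix.l2_opNorm_transpose_mul_mul_le_of_transpose_mul_self_eq_one [DecidableEq ι]
    [DecidableEq κ] {V : Matrix ι κ ℝ} (hV : Vᵀ * V = 1) (A : Matrix ι ι ℝ) : ‖Vᵀ * A * V‖ ≤ ‖A‖ :=
  calc ‖Vᵀ * A * V‖ ≤ ‖Vᵀ * A‖ * ‖V‖ := l2_opNorm_mul _ _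
    _ ≤ ‖Vᵀ * A‖ :=
        mul_le_of_le_one_right (norm_nonneg _) (l2_opNorm_le_one_of_transpose_mul_self_eq_one hV)
    _ ≤ ‖A‖ := l2_opNorm_transpose_mul_le_of_transpose_mul_self_eq_one hV A

theorem Matrix.dotProduct_mulVec_transpose_mul_mul (V : Matrix ι κ ℝ) (A : Matrix ι ι ℝ)
    (y : κ → ℝ) : y ⬝ᵥ (Vᵀ * A * V) *ᵥ y = (V *ᵥ y) ⬝ᵥ A *ᵥ (V *ᵥ y) := by
  rw [← mulVec_mulVec, ← mulVec_mulVec, dotProduct_mulVec, vecMul_transpose]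

theorem Matrix.dotProduct_mulVec_transpose_mul_mul_le [DecidableEq ι] [DecidableEq κ]
    {V : Matrix ι κ ℝ} (hV : Vᵀ * V = 1) {A : Matrix ι ι ℝ} {c : ℝ}
    (hA : ∀ x, x ⬝ᵥ A *ᵥ x ≤ c * (x ⬝ᵥ x)) (y : κ → ℝ) :
    y ⬝ᵥ (Vᵀ * A * V) *ᵥ y ≤ c * (y ⬝ᵥ y) := by
  have hiso : (V *ᵥ y) ⬝ᵥ (V *ᵥ y) = y ⬝ᵥ y := by
    simpa [hV] using (dotProduct_mulVec_transpose_mul_mul V 1 y).symm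
  rw [dotProduct_mulVec_transpose_mul_mul, ← hiso]
  exact hA _

theorem Matrix.mul_transpose_mul_of_columns_mem_range [DecidableEq κ] {V : Matrix ι κ ℝ}
    (hV : Vᵀ * V = 1) {M : Matrix ι σ ℝ}
    (hM : ∀ j, (fun i => M i j) ∈ LinearMap.range V.mulVecLin) :
    V * (Vᵀ * M) = M := by
  choose C hC using hM
  have hVC : M = V * of fun k j => C j k := by
    ext i j
    exact (congrFun (hC j) i).symm
  rw [hVC, ← Matrix.mul_assoc Vᵀ, hV, Matrix.one_mul]

theorem krylov_mul_pow_transpose_mul_mul [DecidableEq ι] [DecidableEq κ] {m : ℕ}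
    {A : Matrix ι ι ℝ} {B : Matrix ι σ ℝ} {V : Matrix ι κ ℝ}
    (hP : ∀ k < m, V * (Vᵀ * (A ^ k * B)) = A ^ k * B) {k : ℕ} (hk : k < m) :
    V * ((Vᵀ * A * V) ^ k * (Vᵀ * B)) = A ^ k * B := by
  induction k with
  | zero => simpa using hP 0 hk
  | succ k ih =>
    calc V * ((Vᵀ * A * V) ^ (k + 1) * (Vᵀ * B))
        = V * (Vᵀ * (A * (V * ((Vᵀ * A * V) ^ k * (Vᵀ * B))))) := by
          simp only [pow_succ', Matrix.mul_assoc]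
      _ = A ^ (k + 1) * B := by
          rw [ih (by omega), ← Matrix.mul_assoc A, ← pow_succ', hP _ hk]

theorem krylov_norm_exp_smul_mul_sub_le [DecidableEq ι] [DecidableEq κ] [Fintype σ]
    [DecidableEq σ] {m : ℕ} {A : Matrix ι ι ℝ} {B : Matrix ι σ ℝ} {V : Matrix ι κ ℝ}
    (hV : Vᵀ * V = 1) (hP : ∀ k < m, V * (Vᵀ * (A ^ k * B)) = A ^ k * B)
    {s : ℝ} (hs : 0 ≤ s) :
    ‖NormedSpace.exp (s • A) * B - V * NormedSpace.exp (s • (Vᵀ * A * V)) * (Vᵀ * B)‖ ≤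
      (‖B‖ + ‖Vᵀ * B‖) * ((s * ‖A‖) ^ m / m !) * Real.exp (s * ‖A‖) := by
  set T := Vᵀ * A * V
  refine norm_le_of_hasSum_exp_tail (f := fun j => A ^ j * B - V * (T ^ j * (Vᵀ * B))) hs
    (norm_nonneg A) ?_ (fun j hj => ?_) (fun j => ?_)
  · have := (hasSum_exp_smul_mul s A B).sub
      ((hasSum_exp_smul_mul s T (Vᵀ * B)).matrix_mul_left V)
    simpa [smul_sub, Matrix.mul_smul, Matrix.mul_assoc] using this
  · exact sub_eq_zero.2 (krylov_mul_pow_transpose_mul_mul hP hj).symm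
  · have hVT : ‖V * (T ^ j * (Vᵀ * B))‖ ≤ ‖A‖ ^ j * ‖Vᵀ * B‖ :=
      calc ‖V * (T ^ j * (Vᵀ * B))‖ ≤ ‖T ^ j‖ * ‖Vᵀ * B‖ :=
            (l2_opNorm_mul_le_of_transpose_mul_self_eq_one hV _).trans (l2_opNorm_mul _ _)
        _ ≤ ‖A‖ ^ j * ‖Vᵀ * B‖ := by
            gcongr
            exact (l2_opNorm_pow_le T j).trans <| pow_le_pow_left₀ (norm_nonneg _)
              (l2_opNorm_transpose_mul_mul_le_of_transpose_mul_self_eq_one hV A) j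
    calc ‖A ^ j * B - V * (T ^ j * (Vᵀ * B))‖
        ≤ ‖A ^ j * B‖ + ‖V * (T ^ j * (Vᵀ * B))‖ := norm_sub_le _ _
      _ ≤ ‖A‖ ^ j * ‖B‖ + ‖A‖ ^ j * ‖Vᵀ * B‖ := by
          gcongr
          exact (l2_opNorm_mul _ _).trans (by gcongr; exact l2_opNorm_pow_le A j)
      _ = ‖A‖ ^ j * (‖B‖ + ‖Vᵀ * B‖) := by ring

theorem krylov_norm_lyapunov_integrand_sub_le [DecidableEq ι] [DecidableEq κ] [Fintype σ]
    [DecidableEq σ] {m : ℕ} {A : Matrix ι ι ℝ} {B : Matrix ι σ ℝ} {V : Matrix ι κ ℝ}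
    (hV : Vᵀ * V = 1) (hP : ∀ k < m, V * (Vᵀ * (A ^ k * B)) = A ^ k * B)
    {c : ℝ} (hA : ∀ x, x ⬝ᵥ A *ᵥ x ≤ c * (x ⬝ᵥ x)) {s : ℝ} (hs : 0 ≤ s) :
    ‖NormedSpace.exp (s • A) * (B * Bᵀ) * NormedSpace.exp (s • Aᵀ) -
        V * NormedSpace.exp (s • (Vᵀ * A * V)) * ((Vᵀ * B) * (Vᵀ * B)ᵀ) *
          NormedSpace.exp (s • (Vᵀ * A * V)ᵀ) * Vᵀ‖ ≤
      2 * ‖B‖ * (‖A‖ ^ m / m !) * (‖B‖ + ‖Vᵀ * B‖) * (Real.exp (s * (c + ‖A‖)) * s ^ m) := by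
  set T := Vᵀ * A * V
  set F := NormedSpace.exp (s • A) * B
  set G := V * NormedSpace.exp (s • T) * (Vᵀ * B)
  have hF : ‖F‖ ≤ Real.exp (s * c) * ‖B‖ :=
    (l2_opNorm_mul _ _).trans (by gcongr; exact l2_opNorm_exp_smul_le A hA hs)
  have hG : ‖G‖ ≤ Real.exp (s * c) * ‖B‖ := by
    calc ‖G‖ ≤ ‖NormedSpace.exp (s • T)‖ * ‖Vᵀ * B‖ := by
          rw [show G = V * (NormedSpace.exp (s • T) * (Vᵀ * B)) from Matrix.mul_assoc _ _ _]
          exact (l2_opNorm_mul_le_of_transpose_mul_self_eq_one hV _).trans (l2_opNorm_mul _ _)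
      _ ≤ Real.exp (s * c) * ‖B‖ := by
          gcongr
          · exact l2_opNorm_exp_smul_le T (dotProduct_mulVec_transpose_mul_mul_le hV hA) hs
          · exact l2_opNorm_transpose_mul_le_of_transpose_mul_self_eq_one hV B
  have hFG := krylov_norm_exp_smul_mul_sub_le hV hP hs
  calc _ = ‖F * Fᵀ - G * Gᵀ‖ := by
        simp only [F, G, transpose_mul, exp_smul_transpose, transpose_transpose, Matrix.mul_assoc]
    _ ≤ (‖F‖ + ‖G‖) * ‖F - G‖ := l2_opNorm_mul_transpose_sub_mul_transpose_le F G
    _ ≤ (2 * (Real.exp (s * c) * ‖B‖)) *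
          ((‖B‖ + ‖Vᵀ * B‖) * ((s * ‖A‖) ^ m / m !) * Real.exp (s * ‖A‖)) := by
        gcongr
        · linarith
    _ = _ := by
        rw [show s * (c + ‖A‖) = s * c + s * ‖A‖ by ring, Real.exp_add, mul_pow]
        ring

end L2OpNorm

theorem krylov_dle_error_bound_general
    (n s q m : ℕ)
    (t₀ Tf : ℝ)
    (A : Matrix (Fin n) (Fin n) ℝ) (B : Matrix (Fin n) (Fin s) ℝ)
    (V : Matrix (Fin n) (Fin q) ℝ) (hV : Vᵀ * V = 1)
    (hrange : LinearMap.range (Matrix.mulVecLin V) =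
      Submodule.span ℝ
        {v : Fin n → ℝ | ∃ k < m, ∃ j : Fin s, v = fun i => (A ^ k * B) i j})
    (T : Matrix (Fin q) (Fin q) ℝ) (hT : T = Vᵀ * A * V)
    (Bm : Matrix (Fin q) (Fin s) ℝ) (hBm : Bm = Vᵀ * B)
    (X Xm : ℝ → Matrix (Fin n) (Fin n) ℝ)
    (hX : ∀ t, X t =
      ∫ τ in t₀..t,
        NormedSpace.exp ((t - τ) • A) * (B * Bᵀ) * NormedSpace.exp ((t - τ) • Aᵀ))
    (hXm : ∀ t, Xm t =
      ∫ τ in t₀..t,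
        V * NormedSpace.exp ((t - τ) • T) * (Bm * Bmᵀ) *
          NormedSpace.exp ((t - τ) • Tᵀ) * Vᵀ) :
    ∀ t ∈ Icc t₀ Tf,
      ‖X t - Xm t‖ ≤
        2 * ‖B‖ * (‖A‖ ^ m / (Nat.factorial m)) *
          Real.exp (t * (mu2 A + ‖A‖)) * (‖B‖ + ‖Bm‖) *
            ∫ τ in t₀..t, Real.exp (-τ * (mu2 A + ‖A‖)) * (t - τ) ^ m := by
  rintro t ⟨ht₀t, -⟩
  subst hT hBm
  have hP : ∀ k < m, V * (Vᵀ * (A ^ k * B)) = A ^ k * B := fun k hk =>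
    mul_transpose_mul_of_columns_mem_range hV fun j =>
      hrange ▸ Submodule.subset_span ⟨k, hk, j, rfl⟩
  have hexp {k : ℕ} (M : Matrix (Fin k) (Fin k) ℝ) :
      Continuous fun τ : ℝ => NormedSpace.exp ((t - τ) • M) :=
    (continuous_exp_smul M).comp (continuous_const.sub continuous_id)
  rw [hX, hXm, ← integral_sub
    ((((hexp A).matrix_mul continuous_const).matrix_mul (hexp Aᵀ)).intervalIntegrable _ _)
    (((((continuous_const.matrix_mul (hexp _)).matrix_mul continuous_const).matrix_mul
      (hexp _)).matrix_mul continuous_const).intervalIntegrable _ _),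
    ← integral_const_mul]
  refine (norm_integral_le_of_norm_le ht₀t (MeasureTheory.ae_of_all _ fun τ hτ =>
    krylov_norm_lyapunov_integrand_sub_le hV hP (dotProduct_mulVec_le_mu2 A)
      (sub_nonneg.2 hτ.2)) (Continuous.intervalIntegrable (by fun_prop) _ _)).trans_eq
    (integral_congr fun τ _ => ?_)
  rw [show (t - τ) * (mu2 A + ‖A‖) = t * (mu2 A + ‖A‖) + -τ * (mu2 A + ‖A‖) by ring,
    Real.exp_add]
  ring

/-- If the columns of `𝒱` form an orthonormal basis of the block Krylov
subspace `𝕂_m(A,B)`, with `𝒯 = 𝒱ᵀ A 𝒱`, `B_m = 𝒱ᵀ B`, `ρ = ‖A‖`, and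
`X(t) = ∫_{t₀}^t e^{(t−τ)A} B Bᵀ e^{(t−τ)Aᵀ} dτ`,
`X_m(t) = ∫_{t₀}^t 𝒱 e^{(t−τ)𝒯} B_m B_mᵀ e^{(t−τ)𝒯ᵀ} 𝒱ᵀ dτ`, then
`‖X(t) − X_m(t)‖ ≤ 2‖B‖ (ρ^m/m!) e^{t(μ₂(A)+ρ)} (‖B‖+‖B_m‖) ∫_{t₀}^t e^{−τ(μ₂(A)+ρ)} (t−τ)^m dτ`
(spectral norms). -/
theorem krylov_dle_error_bound
    (n s q m : ℕ) (hn : 0 < n) (hs : 0 < s) (hq : 0 < q) (hm : 0 < m)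
    (t₀ Tf : ℝ) (ht : t₀ ≤ Tf)
    (A : Matrix (Fin n) (Fin n) ℝ) (B : Matrix (Fin n) (Fin s) ℝ)
    (V : Matrix (Fin n) (Fin q) ℝ) (hV : Vᵀ * V = 1)
    (hrange : LinearMap.range (Matrix.mulVecLin V) =
      Submodule.span ℝ
        {v : Fin n → ℝ | ∃ k < m, ∃ j : Fin s, v = fun i => (A ^ k * B) i j})
    (T : Matrix (Fin q) (Fin q) ℝ) (hT : T = Vᵀ * A * V)
    (Bm : Matrix (Fin q) (Fin s) ℝ) (hBm : Bm = Vᵀ * B)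
    (X Xm : ℝ → Matrix (Fin n) (Fin n) ℝ)
    (hX : ∀ t, X t =
      ∫ τ in t₀..t,
        NormedSpace.exp ((t - τ) • A) * (B * Bᵀ) * NormedSpace.exp ((t - τ) • Aᵀ))
    (hXm : ∀ t, Xm t =
      ∫ τ in t₀..t,
        V * NormedSpace.exp ((t - τ) • T) * (Bm * Bmᵀ) *
          NormedSpace.exp ((t - τ) • Tᵀ) * Vᵀ) :
    ∀ t ∈ Icc t₀ Tf,
      ‖X t - Xm t‖ ≤
        2 * ‖B‖ * (‖A‖ ^ m / (Nat.factorial m)) *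
          Real.exp (t * (mu2 A + ‖A‖)) * (‖B‖ + ‖Bm‖) *
            ∫ τ in t₀..t, Real.exp (-τ * (mu2 A + ‖A‖)) * (t - τ) ^ m :=
  krylov_dle_error_bound_general n s q m t₀ Tf A B V hV hrange T hT Bm hBm X Xm hX hXm
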